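/- arXiv:1904.09474 — 3 statements merged into one kernel-verified Lean document; each statement's English description precedes it below -/
import Mathlib

section
/- The CNOT matrix does not lie in the connected component of the identity matrix within the set B of bias-preserving two-qubit unitaries: CNOT ∉ connectedComponentIn(B, I₄), where B ⊆ Matrix₄ₓ₄(ℂ) carries the subspace topology. In other words, CNOT cannot be continuously connected to the identity inside B. -/
open Matrix Kronecker

/-- The Pauli-Z matrix `diag(1, -1)`. -/
noncomputable def PauliZ : Matrix (Fin 2) (Fin 2) ℂ := !![1, 0; 0, -1]

/-- `Z₁ = Z ⊗ I` on two qubits. -/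
noncomputable def Z1 : Matrix (Fin 2 × Fin 2) (Fin 2 × Fin 2) ℂ :=
  PauliZ ⊗ₖ (1 : Matrix (Fin 2) (Fin 2) ℂ)

/-- `Z₂ = I ⊗ Z` on two qubits. -/
noncomputable def Z2 : Matrix (Fin 2 × Fin 2) (Fin 2 × Fin 2) ℂ :=
  (1 : Matrix (Fin 2) (Fin 2) ℂ) ⊗ₖ PauliZ

/-- The family `(Z₁, Z₂)`. -/
noncomputable def Zq : Fin 2 → Matrix (Fin 2 × Fin 2) (Fin 2 × Fin 2) ℂ := ![Z1, Z2]

/-- The set `B` of bias-preserving two-qubit unitaries: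
`B = {U ∈ U(4) : [U Z_j U†, Z_k] = 0 for all j, k ∈ {1,2}}`. -/
noncomputable def setB : Set (Matrix (Fin 2 × Fin 2) (Fin 2 × Fin 2) ℂ) :=
  {U | U ∈ Matrix.unitaryGroup (Fin 2 × Fin 2) ℂ ∧
    ∀ j k : Fin 2, (U * Zq j * Uᴴ) * Zq k - Zq k * (U * Zq j * Uᴴ) = 0}

/-- The CNOT gate: the 4×4 permutation matrix exchanging the basis vectors
indexed `(1,0)` and `(1,1)` (addition in `Fin 2` is XOR). -/
noncomputable def CNOT : Matrix (Fin 2 × Fin 2) (Fin 2 × Fin 2) ℂ :=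
  Matrix.of fun p q => if p.1 = q.1 ∧ p.2 = q.1 + q.2 then 1 else 0

/-! ### Auxiliary lemmas -/

/-- Diagonal of `Z₁`. -/
noncomputable def z1 : Fin 2 × Fin 2 → ℂ := fun p => if p.1 = 0 then 1 else -1

/-- Diagonal of `Z₂`. -/
noncomputable def z2 : Fin 2 × Fin 2 → ℂ := fun p => if p.2 = 0 then 1 else -1

lemma Z1_diag : Z1 = Matrix.diagonal z1 := by
  ext p q
  obtain ⟨p1, p2⟩ := p; obtain ⟨q1, q2⟩ := q
  simp only [Z1, PauliZ, Matrix.kroneckerMap_apply, Matrix.one_apply, Matrix.diagonal_apply, z1,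
    Prod.mk.injEq]
  fin_cases p1 <;> fin_cases q1 <;> fin_cases p2 <;> fin_cases q2 <;> norm_num

lemma Z2_diag : Z2 = Matrix.diagonal z2 := by
  ext p q
  obtain ⟨p1, p2⟩ := p; obtain ⟨q1, q2⟩ := q
  simp only [Z2, PauliZ, Matrix.kroneckerMap_apply, Matrix.one_apply, Matrix.diagonal_apply, z2,
    Prod.mk.injEq]
  fin_cases p1 <;> fin_cases q1 <;> fin_cases p2 <;> fin_cases q2 <;> norm_num

lemma Z2_mul_Z2 : Z2 * Z2 = 1 := by
  rw [Z2_diag, Matrix.diagonal_mul_diagonal]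
  have : (fun i => z2 i * z2 i) = fun _ => (1:ℂ) := by
    funext p
    simp only [z2]
    split <;> norm_num
  rw [this, Matrix.diagonal_one]

/-- For a bias-preserving unitary `U`, the `((1,0),(1,0))` entry of `U Z₂ U†` is `±1`. -/
lemma entry_pm_one {U : Matrix (Fin 2 × Fin 2) (Fin 2 × Fin 2) ℂ} (hU : U ∈ setB) :
    (U * Z2 * Uᴴ) ((1:Fin 2),(0:Fin 2)) ((1:Fin 2),(0:Fin 2)) = 1 ∨
    (U * Z2 * Uᴴ) ((1:Fin 2),(0:Fin 2)) ((1:Fin 2),(0:Fin 2)) = -1 := by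
  obtain ⟨hU1, hU2⟩ := hU
  set D : Matrix (Fin 2 × Fin 2) (Fin 2 × Fin 2) ℂ := U * Z2 * Uᴴ with hD
  have hc1 : D * Z1 - Z1 * D = 0 := by simpa [Zq] using hU2 1 0
  have hc2 : D * Z2 - Z2 * D = 0 := by simpa [Zq] using hU2 1 1
  have hoff : ∀ p q : Fin 2 × Fin 2, p ≠ q → D p q = 0 := by
    intro p q hpq
    obtain ⟨p1, p2⟩ := p; obtain ⟨q1, q2⟩ := q
    rcases ne_or_eq p1 q1 with h1 | h1
    · have h := congrFun (congrFun hc1 (p1, p2)) (q1, q2)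
      rw [Z1_diag, Matrix.sub_apply, Matrix.mul_diagonal, Matrix.diagonal_mul,
        Matrix.zero_apply] at h
      have hz : z1 (q1, q2) - z1 (p1, p2) ≠ 0 := by
        simp only [z1]
        fin_cases p1 <;> fin_cases q1 <;> simp_all <;> norm_num
      have : D (p1, p2) (q1, q2) * (z1 (q1, q2) - z1 (p1, p2)) = 0 := by linear_combination h
      exact (mul_eq_zero.mp this).resolve_right hz
    · have h2 : p2 ≠ q2 := fun h => hpq (by simp [h1, h])
      have h := congrFun (congrFun hc2 (p1, p2)) (q1, q2)
      rw [Z2_diag, Matrix.sub_apply, Matrix.mul_diagonal, Matrix.diagonal_mul,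
        Matrix.zero_apply] at h
      have hz : z2 (q1, q2) - z2 (p1, p2) ≠ 0 := by
        simp only [z2]
        fin_cases p2 <;> fin_cases q2 <;> simp_all <;> norm_num
      have : D (p1, p2) (q1, q2) * (z2 (q1, q2) - z2 (p1, p2)) = 0 := by linear_combination h
      exact (mul_eq_zero.mp this).resolve_right hz
  have h1 : Uᴴ * U = 1 := Matrix.mem_unitaryGroup_iff'.mp hU1
  have h2 : U * Uᴴ = 1 := Matrix.mem_unitaryGroup_iff.mp hU1
  have hDD : D * D = 1 := by
    rw [hD]
    simp only [Matrix.mul_assoc]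
    rw [← Matrix.mul_assoc Uᴴ U, h1, Matrix.one_mul, ← Matrix.mul_assoc Z2 Z2, Z2_mul_Z2,
      Matrix.one_mul, h2]
  have hsq : D ((1:Fin 2),(0:Fin 2)) ((1:Fin 2),(0:Fin 2)) *
      D ((1:Fin 2),(0:Fin 2)) ((1:Fin 2),(0:Fin 2)) = 1 := by
    have h := congrFun (congrFun hDD ((1:Fin 2),(0:Fin 2))) ((1:Fin 2),(0:Fin 2))
    rw [Matrix.mul_apply, Fintype.sum_prod_type] at h
    simp only [Fin.sum_univ_two] at h
    rw [hoff ((1:Fin 2),(0:Fin 2)) ((0:Fin 2),(0:Fin 2)) (by decide),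
        hoff ((1:Fin 2),(0:Fin 2)) ((0:Fin 2),(1:Fin 2)) (by decide),
        hoff ((1:Fin 2),(0:Fin 2)) ((1:Fin 2),(1:Fin 2)) (by decide)] at h
    simp [Matrix.one_apply] at h
    linear_combination h
  exact mul_self_eq_one_iff.mp hsq

lemma one_mem_setB : (1 : Matrix (Fin 2 × Fin 2) (Fin 2 × Fin 2) ℂ) ∈ setB := by
  have hdiag : ∀ j : Fin 2, Zq j = Matrix.diagonal (![z1, z2] j) := by
    intro j
    fin_cases j <;> simp [Zq, Z1_diag, Z2_diag]
  refine ⟨Submonoid.one_mem _, fun j k => ?_⟩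
  rw [Matrix.conjTranspose_one, Matrix.mul_one, Matrix.one_mul, hdiag j, hdiag k,
    Matrix.diagonal_mul_diagonal, Matrix.diagonal_mul_diagonal, sub_eq_zero]
  have : (fun i => ![z1, z2] j i * ![z1, z2] k i) = fun i => ![z1, z2] k i * ![z1, z2] j i := by
    funext i; ring
  rw [this]

lemma CNOT_entry : ((CNOT * Z2 * CNOTᴴ) ((1:Fin 2),(0:Fin 2)) ((1:Fin 2),(0:Fin 2))) = -1 := by
  simp [CNOT, Z2, PauliZ, Matrix.mul_apply, Fintype.sum_prod_type, Fin.sum_univ_two,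
    Matrix.kroneckerMap_apply, Matrix.one_apply, Matrix.conjTranspose_apply]

lemma one_entry : (((1 : Matrix (Fin 2 × Fin 2) (Fin 2 × Fin 2) ℂ) * Z2 *
    (1 : Matrix (Fin 2 × Fin 2) (Fin 2 × Fin 2) ℂ)ᴴ)
      ((1:Fin 2),(0:Fin 2)) ((1:Fin 2),(0:Fin 2))) = 1 := by
  simp [Z2, PauliZ, Matrix.kroneckerMap_apply, Matrix.one_apply]

/-- The CNOT gate does not lie in the connected component of the identity within the
set `B` of bias-preserving two-qubit unitaries: CNOT cannot be continuously connected
to the identity inside `B`. -/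
theorem CNOT_not_in_connectedComponentIn_setB :
    CNOT ∉ connectedComponentIn setB (1 : Matrix (Fin 2 × Fin 2) (Fin 2 × Fin 2) ℂ) := by
  intro hmem
  set S := connectedComponentIn setB (1 : Matrix (Fin 2 × Fin 2) (Fin 2 × Fin 2) ℂ) with hSdef
  have hS : IsPreconnected S := isPreconnected_connectedComponentIn
  have h1S : (1 : Matrix (Fin 2 × Fin 2) (Fin 2 × Fin 2) ℂ) ∈ S :=
    mem_connectedComponentIn one_mem_setB
  set g : Matrix (Fin 2 × Fin 2) (Fin 2 × Fin 2) ℂ → ℝ :=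
    fun U => ((U * Z2 * Uᴴ) ((1:Fin 2),(0:Fin 2)) ((1:Fin 2),(0:Fin 2))).re with hgdef
  have hgc : Continuous g := by
    have hm : Continuous fun U : Matrix (Fin 2 × Fin 2) (Fin 2 × Fin 2) ℂ => U * Z2 * Uᴴ :=
      (continuous_id.matrix_mul continuous_const).matrix_mul continuous_id.matrix_conjTranspose
    exact Complex.continuous_re.comp
      (((continuous_apply _).comp ((continuous_apply _).comp hm)))
  have hIcc := hS.intermediate_value hmem h1S hgc.continuousOn
  have hg1 : g 1 = 1 := by rw [hgdef]; simp only; rw [one_entry]; simp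
  have hgC : g CNOT = -1 := by rw [hgdef]; simp only; rw [CNOT_entry]; simp
  have h0 : (0 : ℝ) ∈ Set.Icc (g CNOT) (g 1) := by
    rw [hg1, hgC]; constructor <;> norm_num
  obtain ⟨U, hUS, hgU⟩ := hIcc h0
  have hUB : U ∈ setB := connectedComponentIn_subset _ _ hUS
  rcases entry_pm_one hUB with h | h
  · rw [hgdef] at hgU; simp only at hgU; rw [h] at hgU; simp at hgU
  · rw [hgdef] at hgU; simp only at hgU; rw [h] at hgU; norm_num at hgU
end

section
/- Let U be a unitary 4×4 matrix such that U Z₁ U† = r₁ Z₁ + r₂ Z₂ + r₁₂ Z₁Z₂ and U Z₂ U† = s₁ Z₁ + s₂ Z₂ + s₁₂ Z₁Z₂ for complex coefficients r₁, r₂, r₁₂, s₁, s₂, s₁₂. Then the coefficient vectors are orthogonal: r₁ s₁ + r₂ s₂ + r₁₂ s₁₂ = 0, and moreover U (Z₁Z₂) U† = (r₂ s₁₂ + s₂ r₁₂) Z₁ + (r₁ s₁₂ + s₁ r₁₂) Z₂ + (r₁ s₂ + s₁ r₂) Z₁Z₂. -/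
open Matrix Kronecker

lemma PauliZ_mul_self : PauliZ * PauliZ = 1 := by
  rw [PauliZ]
  norm_num [Matrix.mul_fin_two, ← Matrix.one_fin_two]

lemma PauliZ_trace : Matrix.trace PauliZ = 0 := by
  simp [PauliZ, Matrix.trace_fin_two]

lemma Z1_mul_Z2 : Z1 * Z2 = PauliZ ⊗ₖ PauliZ := by
  rw [Z1, Z2, ← Matrix.mul_kronecker_mul, Matrix.mul_one, Matrix.one_mul]

lemma Z1_mul_Z1 : Z1 * Z1 = 1 := by
  rw [Z1, ← Matrix.mul_kronecker_mul, Matrix.mul_one, PauliZ_mul_self, Matrix.one_kronecker_one]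

lemma Z2_mul_Z1 : Z2 * Z1 = Z1 * Z2 := by
  rw [Z1, Z2, ← Matrix.mul_kronecker_mul, ← Matrix.mul_kronecker_mul]
  simp only [Matrix.mul_one, Matrix.one_mul]

lemma Z1_mul_P : Z1 * (Z1 * Z2) = Z2 := by
  rw [Z1_mul_Z2, Z1, Z2, ← Matrix.mul_kronecker_mul, PauliZ_mul_self, Matrix.one_mul]

lemma Z2_mul_P : Z2 * (Z1 * Z2) = Z1 := by
  rw [Z1_mul_Z2, Z1, Z2, ← Matrix.mul_kronecker_mul, PauliZ_mul_self, Matrix.one_mul]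

lemma P_mul_Z1 : (Z1 * Z2) * Z1 = Z2 := by
  rw [Z1_mul_Z2, Z1, Z2, ← Matrix.mul_kronecker_mul, PauliZ_mul_self, Matrix.mul_one]

lemma P_mul_Z2 : (Z1 * Z2) * Z2 = Z1 := by
  rw [Z1_mul_Z2, Z1, Z2, ← Matrix.mul_kronecker_mul, PauliZ_mul_self, Matrix.mul_one]

lemma P_mul_P : (Z1 * Z2) * (Z1 * Z2) = 1 := by
  rw [Z1_mul_Z2, ← Matrix.mul_kronecker_mul, PauliZ_mul_self, Matrix.one_kronecker_one]

lemma Z1_trace : Matrix.trace Z1 = 0 := by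
  simp [Z1, Matrix.trace_kronecker, PauliZ_trace]

lemma Z2_trace : Matrix.trace Z2 = 0 := by
  simp [Z2, Matrix.trace_kronecker, PauliZ_trace]

lemma P_trace : Matrix.trace (Z1 * Z2) = 0 := by
  simp [Z1_mul_Z2, Matrix.trace_kronecker, PauliZ_trace]

/-- If a unitary `U` conjugates `Z₁` and `Z₂` into the span of `{Z₁, Z₂, Z₁Z₂}` with
coefficient vectors `r = (r₁,r₂,r₁₂)` and `s = (s₁,s₂,s₁₂)`, then these vectors are
orthogonal, `r₁s₁ + r₂s₂ + r₁₂s₁₂ = 0`, and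
`U (Z₁Z₂) U† = (r₂s₁₂+s₂r₁₂) Z₁ + (r₁s₁₂+s₁r₁₂) Z₂ + (r₁s₂+s₁r₂) Z₁Z₂`. -/
theorem coefficient_vectors_orthogonal
    (U : Matrix (Fin 2 × Fin 2) (Fin 2 × Fin 2) ℂ)
    (hU : U * Uᴴ = 1 ∧ Uᴴ * U = 1)
    (r₁ r₂ r₁₂ s₁ s₂ s₁₂ : ℂ)
    (hr : U * Z1 * Uᴴ = r₁ • Z1 + r₂ • Z2 + r₁₂ • (Z1 * Z2))
    (hs : U * Z2 * Uᴴ = s₁ • Z1 + s₂ • Z2 + s₁₂ • (Z1 * Z2)) :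
    r₁ * s₁ + r₂ * s₂ + r₁₂ * s₁₂ = 0 ∧
    U * (Z1 * Z2) * Uᴴ =
      (r₂ * s₁₂ + s₂ * r₁₂) • Z1 + (r₁ * s₁₂ + s₁ * r₁₂) • Z2
        + (r₁ * s₂ + s₁ * r₂) • (Z1 * Z2) := by
  have hL : U * (Z1 * Z2) * Uᴴ = (U * Z1 * Uᴴ) * (U * Z2 * Uᴴ) := by
    conv_rhs => rw [Matrix.mul_assoc (U * Z1) Uᴴ, ← Matrix.mul_assoc Uᴴ (U * Z2) Uᴴ,
      ← Matrix.mul_assoc Uᴴ U Z2, hU.2, Matrix.one_mul, ← Matrix.mul_assoc,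
      Matrix.mul_assoc U Z1 Z2]
  have key : U * (Z1 * Z2) * Uᴴ =
      (r₁ * s₁ + r₂ * s₂ + r₁₂ * s₁₂) • (1 : Matrix (Fin 2 × Fin 2) (Fin 2 × Fin 2) ℂ)
        + (r₂ * s₁₂ + s₂ * r₁₂) • Z1 + (r₁ * s₁₂ + s₁ * r₁₂) • Z2
        + (r₁ * s₂ + s₁ * r₂) • (Z1 * Z2) := by
    rw [hL, hr, hs]
    simp only [Matrix.add_mul, Matrix.mul_add, Matrix.smul_mul, Matrix.mul_smul, smul_smul,
      Z1_mul_Z1, Z2_mul_Z2, Z2_mul_Z1, Z1_mul_P, Z2_mul_P, P_mul_Z1, P_mul_Z2, P_mul_P]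
    module
  have htr := congrArg Matrix.trace key
  rw [← Matrix.mul_assoc, Matrix.trace_mul_cycle, ← Matrix.mul_assoc, hU.2, Matrix.one_mul,
    P_trace] at htr
  simp only [Matrix.trace_add, Matrix.trace_smul, Z1_trace, Z2_trace, P_trace,
    Matrix.trace_one, smul_eq_mul, mul_zero, add_zero] at htr
  have h0 : r₁ * s₁ + r₂ * s₂ + r₁₂ * s₁₂ = 0 := by
    have : (Fintype.card (Fin 2 × Fin 2) : ℂ) = 4 := by simp
    rw [this] at htr
    linear_combination -htr / 4
  refine ⟨h0, ?_⟩
  rw [key, h0]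
  module
end

section
/- The geometric phase accumulated by a coherent state whose amplitude is rotated by angle π in time T equals π|α|²: for α ∈ ℂ and T > 0, setting α(t) = α e^{iπt/T} and c_n(t) = e^{−|α|²/2} α(t)ⁿ/√(n!), one has −i ∫₀^T ( ∑_{n=0}^∞ conj(c_n(t)) · (d/dt) c_n(t) ) dt = π|α|². -/
/-!
Each Fock coefficient only picks up a phase, `c_n(t) = c_n(0) e^{inπt/T}`, so
`conj(c_n) c_n′ = (iπ/T) · n |c_n|²`, and `|c_n|² = e^{-|α|²} |α|^{2n}/n!` is the Poisson
distribution of mean `|α|²`. The Berry integrand is therefore the constant `iπ|α|²/T`, and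
integrating it over `[0, T]` gives the phase `π|α|²`.
-/

open scoped ComplexConjugate Real

/-- The Fock-basis coefficients of the rotated coherent state `|α e^{iπt/T}⟩`:
`c_n(t) = e^{−|α|²/2} (α e^{iπt/T})ⁿ/√(n!)`. -/
noncomputable def rotCoeff (α : ℂ) (T : ℝ) (n : ℕ) (t : ℝ) : ℂ :=
  (Real.exp (-(‖α‖) ^ 2 / 2) : ℝ)
    * (α * Complex.exp (Complex.I * (π : ℂ) * (t : ℂ) / (T : ℂ))) ^ n
    / ((Real.sqrt n.factorial : ℝ) : ℂ)

open scoped Nat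

open Complex

theorem hasSum_natCast_mul_pow_div_factorial (r : ℝ) :
    HasSum (fun n : ℕ ↦ n * r ^ n / n !) (r * Real.exp r) := by
  have hshift (n : ℕ) : ((n + 1 : ℕ) : ℝ) * r ^ (n + 1) / (n + 1)! = r * (r ^ n / n !) := by
    rw [Nat.factorial_succ]
    push_cast
    field_simp
    ring
  rw [← hasSum_nat_add_iff' 1, Finset.sum_range_one, Nat.cast_zero, zero_mul, zero_div,
    sub_zero, funext hshift, Real.exp_eq_exp_ℝ]
  exact (NormedSpace.expSeries_div_hasSum_exp r).mul_left r

theorem hasSum_natCast_mul_poisson (r : ℝ) :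
    HasSum (fun n : ℕ ↦ n * (Real.exp (-r) * r ^ n / n !)) r := by
  have h := (hasSum_natCast_mul_pow_div_factorial r).mul_left (Real.exp (-r))
  rw [mul_left_comm, ← Real.exp_add, neg_add_cancel, Real.exp_zero, mul_one] at h
  simpa only [mul_div_assoc, mul_left_comm] using h

theorem rotCoeff_eq_mul_cexp (α : ℂ) (T : ℝ) (n : ℕ) (t : ℝ) :
    rotCoeff α T n t = rotCoeff α T n 0 * exp (n * (I * π / T) * t) := by
  simp only [rotCoeff, ofReal_zero, mul_zero, zero_div, exp_zero, mul_one, mul_pow,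
    ← exp_nat_mul]
  rw [show (n : ℂ) * (I * π / T) * t = n * (I * π * t / T) by ring]
  ring

theorem hasDerivAt_rotCoeff (α : ℂ) (T : ℝ) (n : ℕ) (t : ℝ) :
    HasDerivAt (rotCoeff α T n) (n * (I * π / T) * rotCoeff α T n t) t := by
  have h := (((hasDerivAt_id t).ofReal_comp.const_mul (n * (I * π / T))).cexp).const_mul
    (rotCoeff α T n 0)
  simp only [id, ofReal_one, mul_one, ← mul_assoc, ← rotCoeff_eq_mul_cexp] at h
  exact h.congr_deriv (by ring)

theorem norm_rotCoeff_sq (α : ℂ) (T : ℝ) (n : ℕ) (t : ℝ) :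
    ‖rotCoeff α T n t‖ ^ 2 = Real.exp (-‖α‖ ^ 2) * (‖α‖ ^ 2) ^ n / n ! := by
  have hphase : ‖exp (n * (I * π / T) * t)‖ = 1 := by
    rw [norm_exp]
    simp
  rw [rotCoeff_eq_mul_cexp, norm_mul, hphase, mul_one, rotCoeff]
  simp only [ofReal_zero, mul_zero, zero_div, exp_zero, mul_one, norm_div, norm_mul, norm_pow,
    norm_real, Real.norm_of_nonneg (Real.exp_pos _).le, Real.norm_of_nonneg (Real.sqrt_nonneg _),
    div_pow, mul_pow, Real.sq_sqrt (Nat.cast_nonneg _), ← Real.exp_nat_mul, ← pow_mul]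
  ring_nf

theorem conj_rotCoeff_mul_deriv (α : ℂ) (T : ℝ) (n : ℕ) (t : ℝ) :
    conj (rotCoeff α T n t) * deriv (rotCoeff α T n) t
      = ((n * (Real.exp (-‖α‖ ^ 2) * (‖α‖ ^ 2) ^ n / n !) : ℝ) : ℂ) * (I * π / T) := by
  rw [(hasDerivAt_rotCoeff α T n t).deriv, mul_left_comm, conj_mul', ← norm_rotCoeff_sq α T n t]
  push_cast
  ring

theorem tsum_conj_rotCoeff_mul_deriv (α : ℂ) (T : ℝ) (t : ℝ) :
    ∑' n : ℕ, conj (rotCoeff α T n t) * deriv (rotCoeff α T n) t = I * π * ‖α‖ ^ 2 / T := by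
  rw [tsum_congr (conj_rotCoeff_mul_deriv α T · t)]
  have h := (hasSum_ofReal.mpr (hasSum_natCast_mul_poisson (‖α‖ ^ 2))).mul_right (I * π / T)
  rw [h.tsum_eq]
  push_cast
  ring

/-- The geometric (Berry) phase accumulated by a coherent state whose amplitude is
rotated by an angle `π` in time `T` equals `π|α|²`:
`−i ∫₀ᵀ ⟨α(t)| d/dt |α(t)⟩ dt = π|α|²`, where
`⟨α(t)| d/dt |α(t)⟩ = ∑ₙ conj(c_n(t)) c_n′(t)`. -/
theorem coherent_geometric_phase (α : ℂ) (T : ℝ) (hT : 0 < T) :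
    (-Complex.I) * (∫ t in (0 : ℝ)..T,
        ∑' n : ℕ, conj (rotCoeff α T n t) * deriv (rotCoeff α T n) t)
      = (π : ℂ) * ((‖α‖ : ℝ) : ℂ) ^ 2 := by
  have hT' : (T : ℂ) ≠ 0 := ofReal_ne_zero.mpr hT.ne'
  simp only [tsum_conj_rotCoeff_mul_deriv, intervalIntegral.integral_const, sub_zero,
    real_smul]
  field_simp
  rw [I_sq]
  ring
end
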